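/- arXiv:2104.01391 — 2 statements merged into one kernel-verified Lean document; each statement's English description precedes it below -/
import Mathlib

section
/- For a Dyck path λ of size n with chord multiset Chord(λ), the rational function [n]! / ∏_{c ∈ Chord(λ)} [l(c)] is a polynomial in q with nonnegative integer coefficients (it is the generating function P^A_λ of cover-inclusive Dyck tilings above λ weighted by q^{art}). -/
/-- The `q`-integer `[n] = 1 + q + ⋯ + q^{n-1}` as an element of `ℚ(q)`. -/
noncomputable def qInt (n : ℕ) : RatFunc ℚ := ∑ i ∈ Finset.range n, RatFunc.X ^ i

/-- The `q`-factorial `[n]! = ∏_{i=1}^{n} [i]`. -/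
noncomputable def qFact (n : ℕ) : RatFunc ℚ := ∏ i ∈ Finset.Icc 1 n, qInt i

/-- The canonical embedding of `ℕ[q]` into `ℚ(q)`. -/
noncomputable def natPolyToRatFunc (p : Polynomial ℕ) : RatFunc ℚ :=
  algebraMap (Polynomial ℚ) (RatFunc ℚ) (p.map (Nat.castRingHom ℚ))

/-- Height of the lattice path after the first `k` steps of `w`
(`true` = up step `U`, `false` = down step `D`). -/
def prefixHeight (w : List Bool) (k : ℕ) : ℤ :=
  ((w.take k).count true : ℤ) - ((w.take k).count false : ℤ)

/-- `w` is a Dyck word of size `n`: a balanced word of length `2n` in `U,D`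
all of whose prefix heights are nonnegative. -/
def IsDyckWord (w : List Bool) (n : ℕ) : Prop :=
  w.length = 2 * n ∧ w.count true = n ∧ ∀ k ≤ w.length, 0 ≤ prefixHeight w k

/-- Positions `i < j` form a chord of `w`: the `U` at position `i` is matched with
the `D` at position `j` in the parenthesis matching, i.e. the heights before step `i`
and after step `j` agree and the path stays strictly above that level in between. -/
def IsChord (w : List Bool) (i j : ℕ) : Prop :=
  i < j ∧ j < w.length ∧ w.getD i false = true ∧ w.getD j true = false ∧
    prefixHeight w i = prefixHeight w (j + 1) ∧
    ∀ k, i < k → k ≤ j → prefixHeight w i < prefixHeight w k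

open scoped Classical in
/-- The set of chords of `w`, given by the matching of parentheses. -/
noncomputable def chords (w : List Bool) : Finset (ℕ × ℕ) :=
  (Finset.range w.length ×ˢ Finset.range w.length).filter fun p => IsChord w p.1 p.2

open scoped Classical in
/-- The length `l(c)` of a chord `c`: the number of chords weakly nested inside `c`,
i.e. one plus the number of chords strictly nested inside `c`. -/
noncomputable def chordLength (w : List Bool) (c : ℕ × ℕ) : ℕ :=
  ((chords w).filter fun p => c.1 ≤ p.1 ∧ p.2 ≤ c.2).card

/-!
Write `P(w) = [n]! / ∏_c [l(c)]` for a Dyck word `w` of size `n`. Cut a nonempty `w` at the first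
return of the path to height `0`: `w = U w₁ D w₂` with `w₁, w₂` Dyck words of sizes `k, m`,
`k + m + 1 = n`. The chords of `w` are the outer chord, of length `k + 1`, and the translated
chords of `w₁` and of `w₂`, which keep their lengths. Hence
`P(w) = [k + 1 + m]! / ([k + 1]! [m]!) · P(w₁) · P(w₂)`, and the `q`-binomial coefficient in front
lies in `ℕ[q]` by the `q`-Pascal recurrence; induction on `n` concludes.
-/

open Finset Polynomial

noncomputable def natPolyHom : ℕ[X] →+* RatFunc ℚ :=
  (algebraMap ℚ[X] (RatFunc ℚ)).comp (mapRingHom (Nat.castRingHom ℚ))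

theorem X_mem_rangeS_natPolyHom : RatFunc.X ∈ natPolyHom.rangeS :=
  ⟨X, by simp [natPolyHom]⟩

theorem qInt_ne_zero {n : ℕ} (hn : n ≠ 0) : qInt n ≠ 0 := by
  have h : qInt n = algebraMap ℚ[X] (RatFunc ℚ) (∑ i ∈ range n, X ^ i) := by
    simp [qInt]
  rw [h, map_ne_zero_iff _ (RatFunc.algebraMap_injective ℚ)]
  intro h0
  simpa [eval_geom_sum, hn] using congrArg (eval 1) h0

theorem qInt_add (a b : ℕ) : qInt (a + b) = qInt a + RatFunc.X ^ a * qInt b := by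
  simp only [qInt, sum_range_add, mul_sum, pow_add]

theorem qFact_zero : qFact 0 = 1 := rfl

theorem qFact_succ (n : ℕ) : qFact (n + 1) = qFact n * qInt (n + 1) :=
  prod_Icc_succ_top (Nat.le_add_left 1 n) _

theorem qFact_ne_zero (n : ℕ) : qFact n ≠ 0 :=
  prod_ne_zero_iff.2 fun i hi => qInt_ne_zero (by simp at hi; omega)

noncomputable def qBinom (k m : ℕ) : RatFunc ℚ := qFact (k + m) / (qFact k * qFact m)

theorem qBinom_zero_left (m : ℕ) : qBinom 0 m = 1 := by
  simp [qBinom, qFact_zero, qFact_ne_zero]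

theorem qBinom_zero_right (k : ℕ) : qBinom k 0 = 1 := by
  simp [qBinom, qFact_zero, qFact_ne_zero]

theorem qBinom_succ_succ (k m : ℕ) :
    qBinom (k + 1) (m + 1) = qBinom k (m + 1) + RatFunc.X ^ (k + 1) * qBinom (k + 1) m := by
  have hsum : qInt (k + m + 2) = qInt (k + 1) + RatFunc.X ^ (k + 1) * qInt (m + 1) := by
    rw [← qInt_add]; ring_nf
  simp only [qBinom, show k + 1 + (m + 1) = k + m + 1 + 1 by ring,
    show k + (m + 1) = k + m + 1 by ring, show k + 1 + m = k + m + 1 by ring,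
    qFact_succ (k + m + 1), qFact_succ k, qFact_succ m, hsum]
  have := qFact_ne_zero k
  have := qFact_ne_zero m
  have := qInt_ne_zero (Nat.succ_ne_zero k)
  have := qInt_ne_zero (Nat.succ_ne_zero m)
  field_simp

theorem qBinom_mem_rangeS_natPolyHom (k m : ℕ) : qBinom k m ∈ natPolyHom.rangeS := by
  induction k generalizing m with
  | zero => simp [qBinom_zero_left, one_mem]
  | succ k ihk =>
    induction m with
    | zero => simp [qBinom_zero_right, one_mem]
    | succ m ihm =>
      rw [qBinom_succ_succ]
      exact add_mem (ihk _) (mul_mem (pow_mem X_mem_rangeS_natPolyHom _) ihm)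

theorem qFact_div_eq_qBinom_mul {k m : ℕ} {A B : RatFunc ℚ} (hA : A ≠ 0) (hB : B ≠ 0) :
    qFact (k + m + 1) / (qInt (k + 1) * A * B) =
      qBinom (k + 1) m * (qFact k / A) * (qFact m / B) := by
  have := qFact_ne_zero k
  have := qFact_ne_zero m
  have := qInt_ne_zero (Nat.succ_ne_zero k)
  rw [qBinom, qFact_succ k, show k + 1 + m = k + m + 1 by ring]
  field_simp

section PrefixHeight

variable (a w b : List Bool)

@[simp] theorem prefixHeight_zero : prefixHeight w 0 = 0 := by simp [prefixHeight]

theorem prefixHeight_length :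
    prefixHeight w w.length = (w.count true : ℤ) - w.count false := by
  simp [prefixHeight]

theorem prefixHeight_cons_succ (x : Bool) (s : ℕ) :
    prefixHeight (x :: w) (s + 1) = (if x then 1 else -1) + prefixHeight w s := by
  cases x <;> simp [prefixHeight] <;> ring

theorem prefixHeight_append_of_le {s : ℕ} (hs : s ≤ a.length) :
    prefixHeight (a ++ b) s = prefixHeight a s := by
  simp [prefixHeight, List.take_append_of_le_length hs]

theorem prefixHeight_append_length_add (s : ℕ) :
    prefixHeight (a ++ b) (a.length + s) = prefixHeight a a.length + prefixHeight b s := by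
  simp only [prefixHeight, List.take_append, List.take_length, Nat.add_sub_cancel_left,
    List.count_append, List.take_of_length_le (Nat.le_add_right _ _)]
  push_cast; ring

theorem prefixHeight_append_append {s : ℕ} (hs : s ≤ w.length) :
    prefixHeight (a ++ w ++ b) (a.length + s) = prefixHeight a a.length + prefixHeight w s := by
  rw [List.append_assoc, prefixHeight_append_length_add, prefixHeight_append_of_le _ _ hs]

theorem prefixHeight_take {s t : ℕ} (hs : s ≤ t) :
    prefixHeight (w.take t) s = prefixHeight w s := by
  simp [prefixHeight, List.take_take, min_eq_left hs]

end PrefixHeight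

theorem IsDyckWord.prefixHeight_length_eq_zero {w : List Bool} {n : ℕ} (hw : IsDyckWord w n) :
    prefixHeight w w.length = 0 := by
  obtain ⟨hlen, hcount, -⟩ := hw
  have := List.count_true_add_count_false w
  rw [prefixHeight_length]; omega

theorem isDyckWord_count_true {w : List Bool} (hbal : prefixHeight w w.length = 0)
    (hnonneg : ∀ s ≤ w.length, 0 ≤ prefixHeight w s) : IsDyckWord w (w.count true) := by
  have := List.count_true_add_count_false w
  rw [prefixHeight_length] at hbal
  exact ⟨by omega, rfl, hnonneg⟩

theorem IsDyckWord.eq_nil {w : List Bool} (hw : IsDyckWord w 0) : w = [] :=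
  List.length_eq_zero_iff.mp hw.1

theorem exists_eq_cons_append_singleton {v : List Bool} (hv : v ≠ [])
    (hbal : prefixHeight v v.length = 0)
    (hpos : ∀ s, 0 < s → s < v.length → 0 < prefixHeight v s) :
    ∃ w, v = true :: w ++ [false] ∧ IsDyckWord w (w.count true) := by
  obtain ⟨x, v', rfl⟩ := List.exists_cons_of_ne_nil hv
  rcases List.eq_nil_or_concat' v' with rfl | ⟨w, y, rfl⟩
  · cases x <;> simp [prefixHeight] at hbal
  have hstep : ∀ s ≤ w.length,
      prefixHeight (x :: (w ++ [y])) (s + 1) = (if x then 1 else -1) + prefixHeight w s :=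
    fun s hs => by rw [prefixHeight_cons_succ, prefixHeight_append_of_le _ _ hs]
  have hx : x = true := by
    have := hpos 1 one_pos (by simp)
    rw [hstep 0 (Nat.zero_le _), prefixHeight_zero] at this
    cases x <;> simp_all
  subst hx
  have hnonneg : ∀ s ≤ w.length, 0 ≤ prefixHeight w s := fun s hs => by
    have := hpos (s + 1) s.succ_pos (by simp; omega)
    rw [hstep s hs] at this
    simp at this; omega
  rw [List.length_cons, List.length_append, List.length_singleton, prefixHeight_cons_succ,
    if_pos rfl, prefixHeight_append_length_add] at hbal
  have := hnonneg w.length le_rfl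
  cases y
  · rw [show prefixHeight [false] 1 = -1 by simp [prefixHeight]] at hbal
    exact ⟨w, rfl, isDyckWord_count_true (by linarith) hnonneg⟩
  · rw [show prefixHeight [true] 1 = 1 by simp [prefixHeight]] at hbal
    omega

theorem IsDyckWord.exists_eq_cons_append {w : List Bool} {n : ℕ} (hw : IsDyckWord w (n + 1)) :
    ∃ k m w₁ w₂, w = true :: w₁ ++ false :: w₂ ∧ IsDyckWord w₁ k ∧ IsDyckWord w₂ m ∧
      n = k + m := by
  have hbal := hw.prefixHeight_length_eq_zero
  have hex : ∃ t, 0 < t ∧ prefixHeight w t = 0 := ⟨w.length, by rw [hw.1]; omega, hbal⟩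
  obtain ⟨ht0, htz⟩ := Nat.find_spec hex
  have htle : Nat.find hex ≤ w.length := Nat.find_min' hex ⟨by rw [hw.1]; omega, hbal⟩
  set t := Nat.find hex
  have hlen : (w.take t).length = t := List.length_take_of_le htle
  obtain ⟨w₁, hv, hd₁⟩ :
      ∃ w₁, w.take t = true :: w₁ ++ [false] ∧ IsDyckWord w₁ (w₁.count true) := by
    refine exists_eq_cons_append_singleton ?_ ?_ fun s hs0 hst => ?_
    · rw [← List.length_pos_iff, hlen]; exact ht0
    · rw [hlen, prefixHeight_take _ le_rfl, htz]
    · rw [hlen] at hst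
      rw [prefixHeight_take _ hst.le]
      exact lt_of_le_of_ne (hw.2.2 s (by omega)) fun h => Nat.find_min hex hst ⟨hs0, h.symm⟩
  set w₂ := w.drop t
  have hsplit : w = true :: w₁ ++ false :: w₂ := by
    rw [← List.take_append_drop t w, hv]; simp [w₂]
  have hshift : ∀ s, prefixHeight w (t + s) = prefixHeight w₂ s := fun s => by
    have := prefixHeight_append_length_add (w.take t) w₂ s
    rwa [List.take_append_drop, hlen, prefixHeight_take _ le_rfl, htz, zero_add] at this
  have hlen₂ : w₂.length = w.length - t := List.length_drop
  have hd₂ : IsDyckWord w₂ (w₂.count true) := by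
    refine isDyckWord_count_true ?_ fun s hs => ?_
    · rw [← hshift, hlen₂, Nat.add_sub_cancel' htle, hbal]
    · rw [← hshift]; exact hw.2.2 _ (by omega)
  refine ⟨_, _, w₁, w₂, hsplit, hd₁, hd₂, ?_⟩
  have hlen_w := hw.1
  rw [hsplit] at hlen_w
  simp only [List.length_append, List.length_cons] at hlen_w
  have := hd₁.1
  have := hd₂.1
  omega

theorem mem_chords {w : List Bool} {p : ℕ × ℕ} : p ∈ chords w ↔ IsChord w p.1 p.2 := by
  classical
  simp only [chords, mem_filter, mem_product, mem_range, and_iff_right_iff_imp]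
  exact fun h => ⟨h.1.trans h.2.1, h.2.1⟩

theorem IsChord.lt_of_prefixHeight_le {w : List Bool} {i j s : ℕ} (hc : IsChord w i j)
    (his : i < s) (hs : prefixHeight w s ≤ prefixHeight w i) : j < s := by
  by_contra! hjs
  exact absurd (hc.2.2.2.2.2 s his hjs) hs.not_gt

theorem isChord_append_append_iff (a w b : List Bool) {i j : ℕ} (hj : j < w.length) :
    IsChord (a ++ w ++ b) (a.length + i) (a.length + j) ↔ IsChord w i j := by
  have hh : ∀ s ≤ w.length, prefixHeight (a ++ w ++ b) (a.length + s) =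
      prefixHeight a a.length + prefixHeight w s := fun s hs => prefixHeight_append_append a w b hs
  have hg : ∀ s < w.length, ∀ d, (a ++ w ++ b).getD (a.length + s) d = w.getD s d := by
    intro s hs d
    rw [List.append_assoc, List.getD_append_right _ _ _ _ (Nat.le_add_right _ _),
      Nat.add_sub_cancel_left, List.getD_append _ _ _ _ hs]
  simp only [IsChord]
  constructor
  · rintro ⟨hij, -, hi, hj', heq, hlt⟩
    refine ⟨by omega, hj, by rwa [hg i (by omega)] at hi, by rwa [hg j hj] at hj', ?_,
      fun s his hsj => ?_⟩
    · rw [add_assoc, hh i (by omega), hh (j + 1) hj] at heq; linarith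
    · have := hlt (a.length + s) (by omega) (by omega)
      rw [hh i (by omega), hh s (by omega)] at this; linarith
  · rintro ⟨hij, -, hi, hj', heq, hlt⟩
    refine ⟨by omega, by simp; omega, by rwa [hg i (by omega)], by rwa [hg j hj], ?_,
      fun s his hsj => ?_⟩
    · rw [add_assoc, hh i (by omega), hh (j + 1) hj, heq]
    · obtain ⟨s, rfl⟩ := Nat.exists_eq_add_of_le (show a.length ≤ s by omega)
      rw [hh i (by omega), hh s (by omega)]
      linarith [hlt s (by omega) (by omega)]

def shiftPair (c : ℕ) : ℕ × ℕ ↪ ℕ × ℕ := (addLeftEmbedding c).prodMap (addLeftEmbedding c)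

@[simp] theorem shiftPair_apply (c : ℕ) (p : ℕ × ℕ) : shiftPair c p = (c + p.1, c + p.2) := rfl

theorem shiftPair_mem_chords_append_append_iff (a w b : List Bool) {p : ℕ × ℕ}
    (hp : p.2 < w.length) : shiftPair a.length p ∈ chords (a ++ w ++ b) ↔ p ∈ chords w := by
  rw [mem_chords, mem_chords, shiftPair_apply, isChord_append_append_iff a w b hp]

theorem chordLength_append_append (a b : List Bool) {w : List Bool} {c : ℕ × ℕ}
    (hc : c ∈ chords w) : chordLength (a ++ w ++ b) (shiftPair a.length c) = chordLength w c := by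
  have hcw := (mem_chords.mp hc).2.1
  unfold chordLength
  conv_rhs => rw [← card_map (shiftPair a.length)]
  congr 1
  ext ⟨i, j⟩
  rw [mem_filter, mem_map]
  simp only [mem_filter, shiftPair_apply, Prod.mk.injEq]
  constructor
  · rintro ⟨hp, hi, hj⟩
    have hij := (mem_chords.mp hp).1
    obtain ⟨i, rfl⟩ := Nat.exists_eq_add_of_le (show a.length ≤ i by omega)
    obtain ⟨j, rfl⟩ := Nat.exists_eq_add_of_le (show a.length ≤ j by omega)
    refine ⟨(i, j), ⟨?_, by simp at hi hj ⊢; omega⟩, rfl, rfl⟩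
    exact (shiftPair_mem_chords_append_append_iff a w b (by simp at hj ⊢; omega)).mp hp
  · rintro ⟨q, ⟨hq, hi, hj⟩, rfl, rfl⟩
    exact ⟨(shiftPair_mem_chords_append_append_iff a w b (by omega)).mpr hq, by simp; omega,
      by simp; omega⟩

section FirstReturn

variable {w₁ : List Bool} {k : ℕ}

theorem prefixHeight_cons_append_succ (w₂ : List Bool) {s : ℕ} (hs : s ≤ w₁.length) :
    prefixHeight (true :: w₁ ++ false :: w₂) (s + 1) = 1 + prefixHeight w₁ s := by
  rw [List.cons_append, prefixHeight_cons_succ, prefixHeight_append_of_le _ _ hs, if_pos rfl]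

theorem IsDyckWord.one_le_prefixHeight_cons_append (hw₁ : IsDyckWord w₁ k) (w₂ : List Bool)
    {s : ℕ} (hs₀ : 0 < s) (hs : s ≤ w₁.length + 1) :
    1 ≤ prefixHeight (true :: w₁ ++ false :: w₂) s := by
  obtain ⟨s, rfl⟩ := Nat.exists_eq_add_one_of_ne_zero hs₀.ne'
  rw [prefixHeight_cons_append_succ w₂ (by omega)]
  linarith [hw₁.2.2 s (by omega)]

theorem IsDyckWord.prefixHeight_cons_append_return (hw₁ : IsDyckWord w₁ k) (w₂ : List Bool) :
    prefixHeight (true :: w₁ ++ false :: w₂) (w₁.length + 2) = 0 := by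
  rw [show w₁.length + 2 = (w₁.length + 1) + 1 by rfl, List.cons_append, prefixHeight_cons_succ,
    prefixHeight_append_length_add, hw₁.prefixHeight_length_eq_zero, prefixHeight_cons_succ]
  simp

theorem IsDyckWord.isChord_cons_append (hw₁ : IsDyckWord w₁ k) (w₂ : List Bool) :
    IsChord (true :: w₁ ++ false :: w₂) 0 (w₁.length + 1) := by
  refine ⟨by omega, by simp, rfl, ?_, ?_, fun s hs₀ hs => ?_⟩
  · simp [List.getD_eq_getElem?_getD]
  · rw [hw₁.prefixHeight_cons_append_return, prefixHeight_zero]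
  · rw [prefixHeight_zero]
    linarith [hw₁.one_le_prefixHeight_cons_append w₂ hs₀ hs]

theorem IsDyckWord.isChord_cons_append_of_fst_le (hw₁ : IsDyckWord w₁ k) {w₂ : List Bool} {i j : ℕ}
    (hc : IsChord (true :: w₁ ++ false :: w₂) i j) (hi : i ≤ w₁.length) :
    i = 0 ∧ j = w₁.length + 1 ∨ 0 < i ∧ j ≤ w₁.length := by
  have hj : j ≤ w₁.length + 1 := by
    refine Nat.le_of_lt_succ (hc.lt_of_prefixHeight_le (by omega) ?_)
    rw [hw₁.prefixHeight_cons_append_return]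
    rcases Nat.eq_zero_or_pos i with rfl | hi₀
    · rw [prefixHeight_zero]
    · linarith [hw₁.one_le_prefixHeight_cons_append w₂ hi₀ (by omega)]
  have heq := hc.2.2.2.2.1
  rcases Nat.eq_zero_or_pos i with rfl | hi₀
  · refine Or.inl ⟨rfl, by_contra fun hj' => ?_⟩
    have := hw₁.one_le_prefixHeight_cons_append w₂ (s := j + 1) (by omega) (by omega)
    rw [← heq, prefixHeight_zero] at this
    omega
  · refine Or.inr ⟨hi₀, by_contra fun hj' => ?_⟩
    have := hw₁.one_le_prefixHeight_cons_append w₂ hi₀ (by omega)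
    rw [heq, show j + 1 = w₁.length + 2 by omega, hw₁.prefixHeight_cons_append_return] at this
    omega

theorem IsDyckWord.chords_cons_append (hw₁ : IsDyckWord w₁ k) (w₂ : List Bool) :
    chords (true :: w₁ ++ false :: w₂) = insert (0, w₁.length + 1)
      ((chords w₁).map (shiftPair 1) ∪ (chords w₂).map (shiftPair (w₁.length + 2))) := by
  have hu₁ : true :: w₁ ++ false :: w₂ = [true] ++ w₁ ++ false :: w₂ := rfl
  have hu₂ : true :: w₁ ++ false :: w₂ = (true :: w₁ ++ [false]) ++ w₂ ++ [] := by simp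
  have hlen₂ : (true :: w₁ ++ [false]).length = w₁.length + 2 := by simp
  ext ⟨i, j⟩
  simp only [mem_insert, mem_union, mem_map, shiftPair_apply, Prod.mk.injEq]
  constructor
  · intro hc
    have hc' := mem_chords.mp hc
    have hij := hc'.1
    have hju := hc'.2.1
    rcases lt_trichotomy i (w₁.length + 1) with hi | rfl | hi
    · rcases hw₁.isChord_cons_append_of_fst_le hc' (by omega) with h | ⟨hi₀, hj⟩
      · exact Or.inl h
      refine Or.inr (Or.inl ⟨(i - 1, j - 1), ?_, by omega, by omega⟩)
      rw [hu₁] at hc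
      rw [← shiftPair_mem_chords_append_append_iff [true] w₁ (false :: w₂) (by simp; omega)]
      convert hc using 2 <;> simp <;> omega
    · exact absurd hc'.2.2.1 (by simp [List.getD_eq_getElem?_getD])
    · refine Or.inr (Or.inr
        ⟨(i - (w₁.length + 2), j - (w₁.length + 2)), ?_, by omega, by omega⟩)
      rw [hu₂] at hc
      rw [← shiftPair_mem_chords_append_append_iff (true :: w₁ ++ [false]) w₂ []
        (by simp at hju ⊢; omega)]
      convert hc using 2 <;> simp <;> omega
  · rintro (⟨rfl, rfl⟩ | ⟨q, hq, rfl, rfl⟩ | ⟨q, hq, rfl, rfl⟩)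
    · exact mem_chords.mpr (hw₁.isChord_cons_append w₂)
    · rw [hu₁]
      exact (shiftPair_mem_chords_append_append_iff [true] w₁ _ (mem_chords.mp hq).2.1).mpr hq
    · rw [hu₂, ← hlen₂]
      exact (shiftPair_mem_chords_append_append_iff _ w₂ [] (mem_chords.mp hq).2.1).mpr hq

@[to_additive]
theorem IsDyckWord.prod_chords_cons_append {M : Type*} [CommMonoid M] (hw₁ : IsDyckWord w₁ k)
    (w₂ : List Bool) (f : ℕ × ℕ → M) :
    ∏ c ∈ chords (true :: w₁ ++ false :: w₂), f c = f (0, w₁.length + 1) *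
      (∏ c ∈ chords w₁, f (shiftPair 1 c)) * ∏ c ∈ chords w₂, f (shiftPair (w₁.length + 2) c) := by
  have hdisj : Disjoint ((chords w₁).map (shiftPair 1))
      ((chords w₂).map (shiftPair (w₁.length + 2))) := by
    simp only [disjoint_left, mem_map, shiftPair_apply, not_exists, not_and]
    rintro _ ⟨p, hp, rfl⟩ q _ hpq
    have := (mem_chords.mp hp).2.1
    simp only [Prod.mk.injEq] at hpq
    omega
  rw [hw₁.chords_cons_append, prod_insert (by simp), prod_union hdisj, prod_map, prod_map,
    mul_assoc]

theorem IsDyckWord.card_chords {w : List Bool} {n : ℕ} (hw : IsDyckWord w n) :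
    (chords w).card = n := by
  induction n using Nat.strong_induction_on generalizing w with
  | _ n ih =>
    rcases n with _ | n
    · simp [hw.eq_nil, chords]
    obtain ⟨k, m, w₁, w₂, rfl, hw₁, hw₂, rfl⟩ := hw.exists_eq_cons_append
    rw [card_eq_sum_ones, hw₁.sum_chords_cons_append, ← card_eq_sum_ones, ← card_eq_sum_ones,
      ih k (by omega) hw₁, ih m (by omega) hw₂]
    ring

theorem IsDyckWord.chordLength_cons_append (hw₁ : IsDyckWord w₁ k) (w₂ : List Bool) :
    chordLength (true :: w₁ ++ false :: w₂) (0, w₁.length + 1) = k + 1 := by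
  have hbound : ∀ p ∈ chords w₁, p.2 < w₁.length := fun p hp => (mem_chords.mp hp).2.1
  rw [chordLength, hw₁.chords_cons_append, filter_insert, if_pos (by simp), filter_union,
    filter_true_of_mem, filter_false_of_mem, union_empty, card_insert_of_notMem (by simp),
    card_map, hw₁.card_chords]
  · simp only [mem_map, shiftPair_apply]
    rintro _ ⟨p, -, rfl⟩
    omega
  · simp only [mem_map, shiftPair_apply]
    rintro _ ⟨p, hp, rfl⟩
    have := hbound p hp
    omega

end FirstReturn

theorem chordLength_pos {w : List Bool} {c : ℕ × ℕ} (hc : c ∈ chords w) : 0 < chordLength w c :=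
  card_pos.mpr ⟨c, mem_filter.mpr ⟨hc, le_rfl, le_rfl⟩⟩

theorem prod_qInt_chordLength_ne_zero (w : List Bool) :
    ∏ c ∈ chords w, qInt (chordLength w c) ≠ 0 :=
  prod_ne_zero_iff.mpr fun _ hc => qInt_ne_zero (chordLength_pos hc).ne'

theorem IsDyckWord.prod_qInt_chordLength_cons_append {w₁ : List Bool} {k : ℕ}
    (hw₁ : IsDyckWord w₁ k) (w₂ : List Bool) :
    ∏ c ∈ chords (true :: w₁ ++ false :: w₂), qInt (chordLength (true :: w₁ ++ false :: w₂) c) =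
      qInt (k + 1) * (∏ c ∈ chords w₁, qInt (chordLength w₁ c)) *
        ∏ c ∈ chords w₂, qInt (chordLength w₂ c) := by
  rw [hw₁.prod_chords_cons_append, hw₁.chordLength_cons_append]
  refine congr_arg₂ (· * ·) (congrArg _ (prod_congr rfl fun c hc => congrArg qInt ?_))
    (prod_congr rfl fun c hc => congrArg qInt ?_)
  · exact chordLength_append_append [true] (false :: w₂) hc
  · simpa using chordLength_append_append (true :: w₁ ++ [false]) [] hc

theorem IsDyckWord.qFact_div_prod_mem_rangeS_natPolyHom {w : List Bool} {n : ℕ}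
    (hw : IsDyckWord w n) :
    qFact n / ∏ c ∈ chords w, qInt (chordLength w c) ∈ natPolyHom.rangeS := by
  induction n using Nat.strong_induction_on generalizing w with
  | _ n ih =>
    rcases n with _ | n
    · simp [hw.eq_nil, chords, qFact_zero, one_mem]
    obtain ⟨k, m, w₁, w₂, rfl, hw₁, hw₂, rfl⟩ := hw.exists_eq_cons_append
    rw [hw₁.prod_qInt_chordLength_cons_append, qFact_div_eq_qBinom_mul
      (prod_qInt_chordLength_ne_zero w₁) (prod_qInt_chordLength_ne_zero w₂)]
    exact mul_mem (mul_mem (qBinom_mem_rangeS_natPolyHom _ _) (ih k (by omega) hw₁))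
      (ih m (by omega) hw₂)

/-- For a Dyck path `λ` of size `n`, the rational function
`[n]! / ∏_{c ∈ Chord(λ)} [l(c)]` is a polynomial in `q` with nonnegative integer
coefficients (it is the generating function `P^A_λ` of cover-inclusive Dyck tilings
above `λ` weighted by `q^{art}`). -/
theorem qFact_div_prod_chord_is_natPoly (n : ℕ) (w : List Bool) (hw : IsDyckWord w n) :
    ∃ p : Polynomial ℕ,
      qFact n / ∏ c ∈ chords w, qInt (chordLength w c) = natPolyToRatFunc p := by
  obtain ⟨p, hp⟩ := hw.qFact_div_prod_mem_rangeS_natPolyHom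
  exact ⟨p, hp.symm⟩
end

section
/- For positive integers M, N, the rational function [M+N choose M]_{q²} · ([2M+N]/[2(M+N)]) · ∏_{i=1}^{N}(1+q^i) is a polynomial in q with integer coefficients. -/
/-- The double `q`-factorial `[2M]!! = ∏_{i=1}^{M} [2i]`. -/
noncomputable def qDoubleFact (M : ℕ) : RatFunc ℚ := ∏ i ∈ Finset.Icc 1 M, qInt (2 * i)

/-- The `q²`-analogue binomial coefficient
`[n choose m]_{q²} = [2n]!!/([2(n−m)]!! · [2m]!!)`. -/
noncomputable def qBinomSq (n m : ℕ) : RatFunc ℚ :=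
  qDoubleFact n / (qDoubleFact (n - m) * qDoubleFact m)

/-- The canonical embedding of `ℤ[q]` into `ℚ(q)`. -/
noncomputable def intPolyToRatFunc (p : Polynomial ℤ) : RatFunc ℚ :=
  algebraMap (Polynomial ℚ) (RatFunc ℚ) (p.map (Int.castRingHom ℚ))

/-! Since `[2i] = [i](1 + qⁱ)`, the double factorial `[2n]!!` is `[n]! ∏_{i ≤ n} (1 + qⁱ)`, so
`[n choose M]_{q²}` is the Gaussian binomial `[n choose M]_q` times a quotient of such products.
With `n = M + N`, the factor `∏_{i ≤ N} (1 + qⁱ)` leaves `∏_{M < i ≤ n} (1 + qⁱ)`, whose top factor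
cancels against `[2n] = [n](1 + qⁿ)`. Writing `[2M + N] = [n] + qⁿ[M]` and using the absorption
`[M]/[n] · [n choose M]_q = [n-1 choose M-1]_q`, the weight equals
`([n choose M]_q + qⁿ [n-1 choose M-1]_q) ∏_{M < i < n} (1 + qⁱ)`, and Gaussian binomials are
integer polynomials by the `q`-Pascal recursion. -/

open Finset

namespace QAnalog

section CommSemiring

variable {R S : Type*} [CommSemiring R] [CommSemiring S] (q : R)

def qNat (n : ℕ) : R := ∑ i ∈ range n, q ^ i

def qFactorial (n : ℕ) : R := ∏ i ∈ Icc 1 n, qNat q i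

def qDoubleFactorial (n : ℕ) : R := ∏ i ∈ Icc 1 n, qNat q (2 * i)

def prodOneAddPow (n : ℕ) : R := ∏ i ∈ Icc 1 n, (1 + q ^ i)

def qChoose : ℕ → ℕ → R
  | _, 0 => 1
  | 0, _ + 1 => 0
  | n + 1, k + 1 => qChoose n k + q ^ (k + 1) * qChoose n (k + 1)

lemma qNat_one (n : ℕ) : qNat (1 : R) n = n := by
  simp [qNat]

lemma qNat_add (a b : ℕ) : qNat q (a + b) = qNat q a + q ^ a * qNat q b := by
  simp only [qNat, sum_range_add, pow_add, mul_sum]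

lemma qNat_two_mul (n : ℕ) : qNat q (2 * n) = qNat q n * (1 + q ^ n) := by
  rw [two_mul, qNat_add]
  ring

lemma qFactorial_succ (n : ℕ) : qFactorial q (n + 1) = qFactorial q n * qNat q (n + 1) :=
  prod_Icc_succ_top (by omega) _

lemma prodOneAddPow_add (a b : ℕ) :
    prodOneAddPow q (a + b) = prodOneAddPow q a * ∏ i ∈ Ioc a (a + b), (1 + q ^ i) := by
  have hIcc (n : ℕ) : Icc 1 n = Ioc 0 n := Icc_add_one_left_eq_Ioc 0 n
  rw [prodOneAddPow, prodOneAddPow, hIcc, hIcc, prod_Ioc_consecutive _ a.zero_le (by omega)]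

lemma qDoubleFactorial_eq (n : ℕ) :
    qDoubleFactorial q n = qFactorial q n * prodOneAddPow q n := by
  simp only [qDoubleFactorial, qFactorial, prodOneAddPow, ← prod_mul_distrib, qNat_two_mul]

@[simp] lemma qChoose_zero_right (n : ℕ) : qChoose q n 0 = 1 := by
  cases n <;> rfl

lemma qChoose_succ_succ (n k : ℕ) :
    qChoose q (n + 1) (k + 1) = qChoose q n k + q ^ (k + 1) * qChoose q n (k + 1) := rfl

lemma qChoose_eq_zero_of_lt {n k : ℕ} (h : n < k) : qChoose q n k = 0 := by
  induction n generalizing k with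
  | zero => obtain ⟨k, rfl⟩ := Nat.exists_eq_add_one_of_ne_zero (by omega : k ≠ 0); rfl
  | succ n ih =>
    obtain ⟨k, rfl⟩ := Nat.exists_eq_add_one_of_ne_zero (by omega : k ≠ 0)
    rw [qChoose_succ_succ, ih (by omega), ih (by omega), mul_zero, add_zero]

@[simp] lemma qChoose_self (n : ℕ) : qChoose q n n = 1 := by
  induction n with
  | zero => rfl
  | succ n ih =>
    rw [qChoose_succ_succ, ih, qChoose_eq_zero_of_lt q n.lt_succ_self, mul_zero, add_zero]

theorem qChoose_mul_qFactorial_mul_qFactorial (a b : ℕ) :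
    qChoose q (a + b) a * (qFactorial q a * qFactorial q b) = qFactorial q (a + b) := by
  induction hn : a + b generalizing a b with
  | zero =>
    obtain ⟨rfl, rfl⟩ : a = 0 ∧ b = 0 := by omega
    simp [qFactorial]
  | succ n ih =>
    rcases a with _ | a
    · obtain rfl : b = n + 1 := by omega
      simp [qFactorial]
    rcases b with _ | b
    · obtain rfl : a = n := by omega
      simp [qFactorial]
    have hA := ih a (b + 1) (by omega)
    have hB := ih (a + 1) b (by omega)
    calc qChoose q (n + 1) (a + 1) * (qFactorial q (a + 1) * qFactorial q (b + 1))
        = qChoose q n a * (qFactorial q a * qFactorial q (b + 1)) * qNat q (a + 1)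
          + q ^ (a + 1) * (qChoose q n (a + 1) * (qFactorial q (a + 1) * qFactorial q b))
            * qNat q (b + 1) := by
          rw [qChoose_succ_succ, qFactorial_succ q a, qFactorial_succ q b]; ring
      _ = qFactorial q n * (qNat q (a + 1) + q ^ (a + 1) * qNat q (b + 1)) := by
          rw [hA, hB]; ring
      _ = qFactorial q (n + 1) := by
          rw [← qNat_add, qFactorial_succ, show a + 1 + (b + 1) = n + 1 by omega]

lemma map_qNat (f : R →+* S) (n : ℕ) : f (qNat q n) = qNat (f q) n := by
  simp [qNat]

lemma map_qChoose (f : R →+* S) (n k : ℕ) : f (qChoose q n k) = qChoose (f q) n k := by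
  induction n generalizing k with
  | zero => cases k <;> simp [qChoose]
  | succ n ih => cases k <;> simp [qChoose_succ_succ, ih]

end CommSemiring

section Field

variable {K : Type*} [Field K] {q : K}

lemma one_add_pow_ne_zero (hq : ∀ i, 0 < i → qNat q i ≠ 0) {i : ℕ} (hi : 0 < i) :
    1 + q ^ i ≠ 0 :=
  right_ne_zero_of_mul (qNat_two_mul q i ▸ hq (2 * i) (by omega))

lemma qFactorial_ne_zero (hq : ∀ i, 0 < i → qNat q i ≠ 0) (n : ℕ) : qFactorial q n ≠ 0 :=
  prod_ne_zero_iff.2 fun i hi => hq i (by simp at hi; omega)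

lemma prodOneAddPow_ne_zero (hq : ∀ i, 0 < i → qNat q i ≠ 0) (n : ℕ) : prodOneAddPow q n ≠ 0 :=
  prod_ne_zero_iff.2 fun i hi => one_add_pow_ne_zero hq (by simp at hi; omega)

lemma qChoose_add_eq_div (hq : ∀ i, 0 < i → qNat q i ≠ 0) (a b : ℕ) :
    qChoose q (a + b) a = qFactorial q (a + b) / (qFactorial q a * qFactorial q b) :=
  eq_div_of_mul_eq (mul_ne_zero (qFactorial_ne_zero hq a) (qFactorial_ne_zero hq b))
    (qChoose_mul_qFactorial_mul_qFactorial q a b)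

theorem thirdRuleWeight_eq (hq : ∀ i, 0 < i → qNat q i ≠ 0) {M N : ℕ} (hM : 0 < M)
    (hN : 0 < N) :
    qDoubleFactorial q (M + N) / (qDoubleFactorial q N * qDoubleFactorial q M) *
        (qNat q (2 * M + N) / qNat q (2 * (M + N))) * prodOneAddPow q N =
      (qChoose q (M + N) M + q ^ (M + N) * qChoose q (M + N - 1) (M - 1)) *
        ∏ i ∈ Ioo M (M + N), (1 + q ^ i) := by
  obtain ⟨m, rfl⟩ := Nat.exists_eq_add_one_of_ne_zero hM.ne'
  rw [Nat.add_sub_cancel, show m + 1 + N - 1 = m + N by omega]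
  have hC₁ := qChoose_add_eq_div hq (m + 1) N
  have hC₂ := qChoose_add_eq_div hq m N
  have hF : qFactorial q (m + 1 + N) = qFactorial q (m + N) * qNat q (m + 1 + N) := by
    rw [show m + 1 + N = m + N + 1 by omega, qFactorial_succ]
  have hT : prodOneAddPow q (m + 1 + N) = prodOneAddPow q (m + 1) *
      (∏ i ∈ Ioo (m + 1) (m + 1 + N), (1 + q ^ i)) * (1 + q ^ (m + 1 + N)) := by
    rw [prodOneAddPow_add, ← Ioo_insert_right (by omega), prod_insert right_notMem_Ioo]
    ring
  have hnum : qNat q (2 * (m + 1) + N) =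
      qNat q (m + 1 + N) + q ^ (m + 1 + N) * qNat q (m + 1) := by
    rw [← qNat_add]
    congr 1
    omega
  have hFm := qFactorial_ne_zero hq m
  have hFN := qFactorial_ne_zero hq N
  have hTM := prodOneAddPow_ne_zero hq (m + 1)
  have hTN := prodOneAddPow_ne_zero hq N
  have hqM := hq (m + 1) (by omega)
  have hqn := hq (m + 1 + N) (by omega)
  have hqn' := one_add_pow_ne_zero hq (i := m + 1 + N) (by omega)
  rw [qDoubleFactorial_eq, qDoubleFactorial_eq, qDoubleFactorial_eq, qNat_two_mul, hnum, hC₁, hC₂,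
    hT, hF, qFactorial_succ q m]
  field_simp

end Field

lemma qNat_ratFuncX_ne_zero {K : Type*} [Field K] [CharZero K] {i : ℕ} (hi : 0 < i) :
    qNat (RatFunc.X : RatFunc K) i ≠ 0 := by
  rw [← RatFunc.algebraMap_X, ← map_qNat, map_ne_zero_iff _ (IsFractionRing.injective _ _)]
  intro h
  have := congrArg (Polynomial.evalRingHom 1) h
  rw [map_qNat, Polynomial.coe_evalRingHom, Polynomial.eval_X, qNat_one,
    Polynomial.eval_zero] at this
  exact hi.ne' (by exact_mod_cast this)

end QAnalog

open Polynomial QAnalog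

/-- For positive integers `M, N`, the rational function
`[M+N choose M]_{q²} · ([2M+N]/[2(M+N)]) · ∏_{i=1}^{N}(1+qⁱ)` is a polynomial in
`q` with integer coefficients. -/
theorem thirdRuleWeight_is_intPoly (M N : ℕ) (hM : 0 < M) (hN : 0 < N) :
    ∃ p : Polynomial ℤ,
      qBinomSq (M + N) M * (qInt (2 * M + N) / qInt (2 * (M + N))) *
          ∏ i ∈ Finset.Icc 1 N, (1 + RatFunc.X ^ i) = intPolyToRatFunc p := by
  let φ : ℤ[X] →+* RatFunc ℚ :=
    (algebraMap ℚ[X] (RatFunc ℚ)).comp (mapRingHom (Int.castRingHom ℚ))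
  have hφX : φ X = RatFunc.X := by simp [φ]
  refine ⟨(qChoose X (M + N) M + X ^ (M + N) * qChoose X (M + N - 1) (M - 1)) *
    ∏ i ∈ Ioo M (M + N), (1 + X ^ i), ?_⟩
  rw [qBinomSq, Nat.add_sub_cancel_left]
  refine (thirdRuleWeight_eq (fun _ => qNat_ratFuncX_ne_zero) hM hN).trans ?_
  change _ = φ _
  simp [map_qChoose, hφX]
end
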